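/- arXiv:1707.08738 — 8 statements merged into one kernel-verified Lean document; each statement's English description precedes it below -/
import Mathlib

section
/- In the probability frame obtained from a type space by setting Ω := X × T and Pr_i(x,t) := β_i(t_i), the introspection condition holds: for every (x,t), the outer measure of the set {(x',t') : β_i(t'_i) = β_i(t_i)} under β_i(t_i) equals 1. -/
/-!
Under `β_i(t_i)` the `i`-th type coordinate has law `δ_{t_i}`, so `β_i(t_i)` is the product of
its marginal on the other coordinates with `δ_{t_i}` (a check on rectangles: `{t_i}` itself need
not be measurable). Hence resetting the `i`-th coordinate to `t_i` preserves `β_i(t_i)`. That map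
sends every point into `{β_i(t'_i) = β_i(t_i)}`, so this set has outer measure at least that of
the whole space.
-/

open MeasureTheory ENNReal

/-- The outer measure induced by `μ`: the infimum of `μ E` over measurable `E ⊇ A`. -/
noncomputable def outerOf {X : Type*} [MeasurableSpace X] (μ : Measure X) (A : Set X) : ℝ≥0∞ :=
  ⨅ (E : Set X) (_ : A ⊆ E) (_ : MeasurableSet E), μ E

lemma outerOf_eq_measure {X : Type*} [MeasurableSpace X] (μ : Measure X) (A : Set X) :
    outerOf μ A = μ A :=
  (measure_eq_iInf A).symm

namespace MeasureTheory.Measure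

variable {α β : Type*} [MeasurableSpace α] [MeasurableSpace β]

lemma isProbabilityMeasure_of_map_eq_dirac {μ : Measure α} {f : α → β} {b : β}
    (h : μ.map f = dirac b) : IsProbabilityMeasure μ :=
  have : IsProbabilityMeasure (μ.map f) := by rw [h]; infer_instance
  isProbabilityMeasure_of_map f

lemma fst_prod_dirac_of_snd_eq_dirac {μ : Measure (α × β)} {b : β} (h : μ.snd = dirac b) :
    μ.fst.prod (dirac b) = μ := by
  have hsnd : ∀ t, MeasurableSet t → μ (Prod.snd ⁻¹' t) = dirac b t := fun t ht => by
    rw [← h, snd_apply ht]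
  have : IsProbabilityMeasure μ := isProbabilityMeasure_of_map_eq_dirac h
  refine prod_eq fun s t hs ht => ?_
  by_cases hb : b ∈ t
  · have hnull : μ (Prod.snd ⁻¹' t)ᶜ = 0 := by
      rw [← Set.preimage_compl, hsnd _ ht.compl, dirac_apply' _ ht.compl]
      simp [hb]
    rw [dirac_apply_of_mem hb, mul_one, fst_apply hs, Set.prod_eq, measure_inter_conull hnull]
  · rw [dirac_apply' _ ht, Set.indicator_of_notMem hb, mul_zero, Set.prod_eq]
    refine measure_mono_null Set.inter_subset_right ?_
    rw [hsnd _ ht, dirac_apply' _ ht, Set.indicator_of_notMem hb]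

/-- Here `u a s` is `a` with its `π`-value replaced by `s`. -/
lemma map_eq_self_of_map_eq_dirac {μ : Measure α} {π : α → β} {u : α → β → α} {b : β}
    (hπ : Measurable π) (hu : Measurable (Function.uncurry u)) (hu_self : ∀ a, u a (π a) = a)
    (h : μ.map π = dirac b) :
    μ.map (fun a => u a b) = μ := by
  set ν := μ.map fun a => (a, π a)
  have hν : ν.fst.prod (dirac b) = ν := by
    refine fst_prod_dirac_of_snd_eq_dirac ?_
    rw [snd_map_prodMk (X := fun a => a) measurable_id, h]
  have : IsProbabilityMeasure μ := isProbabilityMeasure_of_map_eq_dirac h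
  calc μ.map (fun a => u a b)
      = (μ.prod (dirac b)).map (Function.uncurry u) := by
        rw [prod_dirac, map_map hu measurable_prodMk_right]; rfl
    _ = ν.map (Function.uncurry u) := by
        rw [← hν, fst_map_prodMk hπ, map_id']
    _ = μ := by
        rw [map_map hu (measurable_id'.prodMk hπ)]
        simp only [Function.comp_def, Function.uncurry_apply_pair, hu_self, map_id']

end MeasureTheory.Measure

lemma map_update_eq_self_of_map_eval_eq_dirac {I X : Type*} [DecidableEq I] [MeasurableSpace X]
    {T : I → Type*} [∀ i, MeasurableSpace (T i)] {μ : Measure (X × ∀ j, T j)} {i : I}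
    {ti : T i} (h : μ.map (fun p => p.2 i) = Measure.dirac ti) :
    μ.map (fun p => (p.1, Function.update p.2 i ti)) = μ :=
  Measure.map_eq_self_of_map_eq_dirac (u := fun p s => (p.1, Function.update p.2 i s))
    (by fun_prop) (by fun_prop) (fun p => by simp) h

theorem stmt6_general {I X : Type*} [MeasurableSpace X]
    {T : I → Type*} [∀ i, MeasurableSpace (T i)]
    (β : ∀ i, T i → Measure (X × ∀ j, T j))
    (hmarg : ∀ i ti, Measure.map (fun p : X × ∀ j, T j => p.2 i) (β i ti) = Measure.dirac ti)
    (i : I) (t : ∀ j, T j) :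
    outerOf (β i (t i)) {p : X × ∀ j, T j | β i (p.2 i) = β i (t i)} = 1 := by
  classical
  set μ := β i (t i)
  have : IsProbabilityMeasure μ := Measure.isProbabilityMeasure_of_map_eq_dirac (hmarg i (t i))
  set reset := fun p : X × ∀ j, T j => (p.1, Function.update p.2 i (t i))
  have hreset : Measurable reset := by fun_prop
  set A := {p : X × ∀ j, T j | β i (p.2 i) = β i (t i)}
  rw [outerOf_eq_measure]
  refine le_antisymm prob_le_one ?_
  calc 1 = μ (reset ⁻¹' A) := by simp [reset, A]
    _ ≤ μ.map reset A := Measure.le_map_apply hreset.aemeasurable A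
    _ = μ A := by rw [map_update_eq_self_of_map_eval_eq_dirac (hmarg i (t i))]

/-- Introspection in the probability frame obtained from a type space: the outer measure,
under `β_i(t_i)`, of the set `{(x',t') : β_i(t'_i) = β_i(t_i)}` equals 1. -/
theorem stmt6 {I X : Type*} [Fintype I] [MeasurableSpace X]
    {T : I → Type*} [∀ i, MeasurableSpace (T i)]
    (β : ∀ i, T i → Measure (X × ∀ j, T j))
    (hprob : ∀ i ti, IsProbabilityMeasure (β i ti))
    (hmarg : ∀ i ti, Measure.map (fun p : X × ∀ j, T j => p.2 i) (β i ti) = Measure.dirac ti)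
    (i : I) (x : X) (t : ∀ j, T j) :
    outerOf (β i (t i)) {p : X × ∀ j, T j | β i (p.2 i) = β i (t i)} = 1 :=
  stmt6_general β hmarg i t
end

section
/- In any probability model satisfying the introspection condition, the formula B_i^θ φ → B_i^1 B_i^θ φ is valid: for every world ω, if Pr_i(ω)([[φ]]) ≥ θ then Pr_i(ω)([[B_i^θ φ]]) = 1. -/
open MeasureTheory ENNReal

/-- The language `L_B^Θ`: primitive propositions, negation, conjunction, and belief
operators `B_i^θ` for `θ ∈ Θ`. -/
inductive Formula (Φ I : Type*) (Θ : Set ℝ≥0∞) : Type _ where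
  | prim : Φ → Formula Φ I Θ
  | neg : Formula Φ I Θ → Formula Φ I Θ
  | conj : Formula Φ I Θ → Formula Φ I Θ → Formula Φ I Θ
  | bel : I → Θ → Formula Φ I Θ → Formula Φ I Θ

/-- Truth sets of formulas in a probability model `(Ω, (Pr_i), π)`. -/
def sem {Ω Φ I : Type*} {Θ : Set ℝ≥0∞} [MeasurableSpace Ω]
    (Pr : I → Ω → Measure Ω) (π : Φ → Set Ω) : Formula Φ I Θ → Set Ω
  | .prim p => π p
  | .neg φ => (sem Pr π φ)ᶜ
  | .conj φ ψ => sem Pr π φ ∩ sem Pr π ψ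
  | .bel i θ φ => {ω | (θ : ℝ≥0∞) ≤ Pr i ω (sem Pr π φ)}

lemma sem_measurable {Ω Φ I : Type*} {Θ : Set ℝ≥0∞} [MeasurableSpace Ω]
    (Pr : I → Ω → Measure Ω)
    (hPr : ∀ i (E : Set Ω) (θ : ℝ≥0∞), MeasurableSet E →
      MeasurableSet {ω | θ ≤ Pr i ω E})
    (π : Φ → Set Ω) (hπ : ∀ p, MeasurableSet (π p)) :
    ∀ φ : Formula Φ I Θ, MeasurableSet (sem Pr π φ)
  | .prim p => hπ p
  | .neg φ => (sem_measurable Pr hPr π hπ φ).compl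
  | .conj φ ψ => (sem_measurable Pr hPr π hπ φ).inter (sem_measurable Pr hPr π hπ ψ)
  | .bel i θ φ => hPr i _ θ (sem_measurable Pr hPr π hπ φ)

/-- Positive introspection is valid: in any probability model satisfying the introspection
condition, if `Pr_i(ω)([[φ]]) ≥ θ` then `Pr_i(ω)([[B_i^θ φ]]) = 1`. -/
theorem stmt9 {Ω Φ I : Type*} {Θ : Set ℝ≥0∞} [Fintype I] [MeasurableSpace Ω]
    (Pr : I → Ω → Measure Ω)
    (hprob : ∀ i ω, IsProbabilityMeasure (Pr i ω))
    (hPr : ∀ i (E : Set Ω) (θ : ℝ≥0∞), MeasurableSet E →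
      MeasurableSet {ω | θ ≤ Pr i ω E})
    (π : Φ → Set Ω) (hπ : ∀ p, MeasurableSet (π p))
    (hintro : ∀ i ω, outerOf (Pr i ω) {ω' | Pr i ω' = Pr i ω} = 1)
    (i : I) (θ : Θ) (φ : Formula Φ I Θ) (ω : Ω)
    (h : (θ : ℝ≥0∞) ≤ Pr i ω (sem Pr π φ)) :
    Pr i ω (sem Pr π (Formula.bel i θ φ)) = 1 := by
  have hE : MeasurableSet (sem Pr π (Formula.bel i θ φ)) :=
    sem_measurable Pr hPr π hπ _
  have hsub : {ω' | Pr i ω' = Pr i ω} ⊆ sem Pr π (Formula.bel i θ φ) := by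
    intro ω' hω'
    simp only [Set.mem_setOf_eq] at hω' ⊢
    show (θ : ℝ≥0∞) ≤ Pr i ω' (sem Pr π φ)
    rw [hω']; exact h
  have h1 : (1 : ℝ≥0∞) ≤ Pr i ω (sem Pr π (Formula.bel i θ φ)) := by
    rw [← hintro i ω]
    exact iInf_le_of_le _ (iInf_le_of_le hsub (iInf_le _ hE))
  exact le_antisymm (prob_le_one) h1
end

section
/- In any probability model satisfying the introspection condition, the negative introspection formula ¬B_i^θ φ → B_i^1 ¬B_i^θ φ is valid: for every world ω, if Pr_i(ω)([[φ]]) < θ then Pr_i(ω)(Ω \ [[B_i^θ φ]]) = 1. -/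
open MeasureTheory ENNReal

/-- Negative introspection is valid: in any probability model satisfying the introspection
condition, if `Pr_i(ω)([[φ]]) < θ` then `Pr_i(ω)(Ω \ [[B_i^θ φ]]) = 1`. -/
theorem stmt10 {Ω Φ I : Type*} {Θ : Set ℝ≥0∞} [Fintype I] [MeasurableSpace Ω]
    (Pr : I → Ω → Measure Ω)
    (hprob : ∀ i ω, IsProbabilityMeasure (Pr i ω))
    (hPr : ∀ i (E : Set Ω) (θ : ℝ≥0∞), MeasurableSet E →
      MeasurableSet {ω | θ ≤ Pr i ω E})
    (π : Φ → Set Ω) (hπ : ∀ p, MeasurableSet (π p))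
    (hintro : ∀ i ω, outerOf (Pr i ω) {ω' | Pr i ω' = Pr i ω} = 1)
    (i : I) (θ : Θ) (φ : Formula Φ I Θ) (ω : Ω)
    (h : Pr i ω (sem Pr π φ) < (θ : ℝ≥0∞)) :
    Pr i ω ((sem Pr π (Formula.bel i θ φ))ᶜ) = 1 := by
  have hmb : MeasurableSet (sem Pr π (Formula.bel i θ φ)) :=
    sem_measurable Pr hPr π hπ _
  have hsub : {ω' | Pr i ω' = Pr i ω} ⊆ (sem Pr π (Formula.bel i θ φ))ᶜ := by
    intro ω' hω' hmem
    simp only [sem, Set.mem_setOf_eq] at hmem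
    rw [Set.mem_setOf_eq.mp hω'] at hmem
    exact absurd hmem (not_le.mpr h)
  have h1 : (1 : ℝ≥0∞) ≤ Pr i ω ((sem Pr π (Formula.bel i θ φ))ᶜ) := by
    rw [← hintro i ω]
    exact iInf_le_of_le _ (iInf_le_of_le hsub (iInf_le _ hmb.compl))
  have := hprob i ω
  exact le_antisymm prob_le_one h1
end

section
/- The truth-preserving correspondence from interpreted type spaces to probability models: given an interpreted type space I = (T, ν) with T = (X, (T_i), (β_i)), the probability model M_I over Ω = X × T with Pr_i(x,t) = β_i(t_i) and π(p) = ν(p) × T satisfies, for every formula φ of L_B^Θ, [[φ]]_{M_I} = [[φ]]_I. -/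
open MeasureTheory ENNReal

/-- Truth sets of formulas in an interpreted type space `(X, (T_i), (β_i), ν)`. -/
def semT {X Φ I : Type*} {Θ : Set ℝ≥0∞} {T : I → Type*}
    [MeasurableSpace X] [∀ i, MeasurableSpace (T i)]
    (β : ∀ i, T i → Measure (X × ∀ j, T j)) (ν : Φ → Set X) :
    Formula Φ I Θ → Set (X × ∀ j, T j)
  | .prim p => {q | q.1 ∈ ν p}
  | .neg φ => (semT β ν φ)ᶜ
  | .conj φ ψ => semT β ν φ ∩ semT β ν ψ
  | .bel i θ φ => {q | (θ : ℝ≥0∞) ≤ β i (q.2 i) (semT β ν φ)}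

/-- The correspondence from interpreted type spaces to probability models is
truth-preserving: with `Ω = X × T`, `Pr_i(x,t) = β_i(t_i)`, `π(p) = ν(p) × T`,
the truth set of every formula in the model equals its truth set in the type space. -/
theorem stmt12 {X Φ I : Type*} {Θ : Set ℝ≥0∞} [Fintype I] {T : I → Type*}
    [MeasurableSpace X] [∀ i, MeasurableSpace (T i)]
    (β : ∀ i, T i → Measure (X × ∀ j, T j))
    (hprob : ∀ i ti, IsProbabilityMeasure (β i ti))
    (ν : Φ → Set X) (φ : Formula Φ I Θ) :
    sem (fun i (q : X × ∀ j, T j) => β i (q.2 i)) (fun p => {q | q.1 ∈ ν p}) φ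
      = semT β ν φ := by
  induction φ with
  | prim p => rfl
  | neg φ ih => simp [sem, semT, ih]
  | conj φ ψ ih1 ih2 => simp [sem, semT, ih1, ih2]
  | bel i θ φ ih => simp [sem, semT, ih]
end

section
/- For each formula φ of L_B^Θ and each state-type tuple (x,t), either x ∪ ⋃_i t_i entails φ or x ∪ ⋃_i t_i entails ¬φ; consequently there is a unique maximal satisfiable set (description) D with D ⊇ x ∪ ⋃_i t_i. -/
open MeasureTheory ENNReal

/-- A probability model: a measurable space of worlds, measurable introspective belief
functions `Pr_i : Ω → Δ(Ω)`, and an interpretation `π` of primitive propositions. -/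
structure ProbModel (Φ : Type) (n : ℕ) (Θ : Set ℝ≥0∞) where
  Ω : Type
  ms : MeasurableSpace Ω
  Pr : Fin n → Ω → @Measure Ω ms
  prob : ∀ i ω, IsProbabilityMeasure (Pr i ω)
  measPr : ∀ i (E : Set Ω) (θ : ℝ≥0∞), MeasurableSet[ms] E →
    MeasurableSet[ms] {ω | θ ≤ Pr i ω E}
  π : Φ → Set Ω
  measπ : ∀ p, MeasurableSet[ms] (π p)
  introspect : ∀ i ω,
    (⨅ (E : Set Ω) (_ : {ω' | Pr i ω' = Pr i ω} ⊆ E) (_ : MeasurableSet[ms] E), Pr i ω E) = 1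

/-- Truth sets in a (bundled) probability model. -/
def ProbModel.sem {Φ : Type} {n : ℕ} {Θ : Set ℝ≥0∞} (M : ProbModel Φ n Θ) :
    Formula Φ (Fin n) Θ → Set M.Ω :=
  @_root_.sem M.Ω Φ (Fin n) Θ M.ms M.Pr M.π

/-- Purely propositional formulas: Boolean combinations of primitive propositions. -/
inductive IsProp {Φ I : Type*} {Θ : Set ℝ≥0∞} : Formula Φ I Θ → Prop where
  | prim (p : Φ) : IsProp (.prim p)
  | neg {φ} : IsProp φ → IsProp (.neg φ)
  | conj {φ ψ} : IsProp φ → IsProp ψ → IsProp (.conj φ ψ)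

/-- `i`-formulas: Boolean combinations of formulas of the form `B_i^θ ψ`. -/
inductive IsIFormula {Φ I : Type*} {Θ : Set ℝ≥0∞} (i : I) : Formula Φ I Θ → Prop where
  | bel (θ : Θ) (φ : Formula Φ I Θ) : IsIFormula i (.bel i θ φ)
  | neg {φ} : IsIFormula i φ → IsIFormula i (.neg φ)
  | conj {φ ψ} : IsIFormula i φ → IsIFormula i ψ → IsIFormula i (.conj φ ψ)

/-- The `0`-description of a world: all purely propositional formulas true at it. -/
def d0 {Φ : Type} {n : ℕ} {Θ : Set ℝ≥0∞} (M : ProbModel Φ n Θ) (ω : M.Ω) :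
    Set (Formula Φ (Fin n) Θ) :=
  {φ | IsProp φ ∧ ω ∈ M.sem φ}

/-- The `i`-description of a world: all `i`-formulas true at it. -/
def di {Φ : Type} {n : ℕ} {Θ : Set ℝ≥0∞} (M : ProbModel Φ n Θ) (i : Fin n) (ω : M.Ω) :
    Set (Formula Φ (Fin n) Θ) :=
  {φ | IsIFormula i φ ∧ ω ∈ M.sem φ}

/-- `ω` satisfies every formula in `S`. -/
def SatAll {Φ : Type} {n : ℕ} {Θ : Set ℝ≥0∞} (M : ProbModel Φ n Θ) (ω : M.Ω)
    (S : Set (Formula Φ (Fin n) Θ)) : Prop :=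
  ∀ φ ∈ S, ω ∈ M.sem φ

/-- Semantic entailment: every world of every probability model satisfying all of `S`
satisfies `φ`. -/
def Entails {Φ : Type} {n : ℕ} {Θ : Set ℝ≥0∞} (S : Set (Formula Φ (Fin n) Θ))
    (φ : Formula Φ (Fin n) Θ) : Prop :=
  ∀ (M : ProbModel Φ n Θ) (ω : M.Ω), SatAll M ω S → ω ∈ M.sem φ

/-- A description: a satisfiable and maximal set of formulas. -/
def IsDescription {Φ : Type} {n : ℕ} {Θ : Set ℝ≥0∞} (D : Set (Formula Φ (Fin n) Θ)) : Prop :=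
  (∃ (M : ProbModel Φ n Θ) (ω : M.Ω), SatAll M ω D) ∧
    ∀ φ : Formula Φ (Fin n) Θ, φ ∈ D ∨ Formula.neg φ ∈ D

/-- For each formula `φ`, the union `x ∪ ⋃_i t_i` of a 0-description and `i`-descriptions
entails `φ` or entails `¬φ`; consequently there is a unique description extending it. -/
theorem stmt14 {Φ : Type} {n : ℕ} {Θ : Set ℝ≥0∞} (M : ProbModel Φ n Θ)
    (ω0 : M.Ω) (ωs : Fin n → M.Ω)
    (S : Set (Formula Φ (Fin n) Θ))
    (hS : S = d0 M ω0 ∪ ⋃ i : Fin n, di M i (ωs i))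
    (hsat : ∃ (M' : ProbModel Φ n Θ) (ω' : M'.Ω), SatAll M' ω' S) :
    (∀ φ : Formula Φ (Fin n) Θ, Entails S φ ∨ Entails S (Formula.neg φ)) ∧
      ∃! D : Set (Formula Φ (Fin n) Θ), IsDescription D ∧ S ⊆ D := by
  have hmem : ∀ φ ∈ S, Entails S φ := fun φ hφ M' ω' hsat' => hsat' φ hφ
  have dich : ∀ φ : Formula Φ (Fin n) Θ, Entails S φ ∨ Entails S (Formula.neg φ) := by
    intro φ
    induction φ with
    | prim p =>
      by_cases h : ω0 ∈ M.sem (Formula.prim p)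
      · exact Or.inl (hmem _ (hS ▸ Or.inl ⟨IsProp.prim p, h⟩))
      · exact Or.inr (hmem _ (hS ▸ Or.inl ⟨IsProp.neg (IsProp.prim p), h⟩))
    | neg φ ih =>
      rcases ih with h | h
      · exact Or.inr fun M' ω' hs => fun hc => hc (h M' ω' hs)
      · exact Or.inl h
    | conj φ ψ ihφ ihψ =>
      rcases ihφ with h | h
      · rcases ihψ with h' | h'
        · exact Or.inl fun M' ω' hs => ⟨h M' ω' hs, h' M' ω' hs⟩
        · exact Or.inr fun M' ω' hs => fun hc => h' M' ω' hs hc.2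
      · exact Or.inr fun M' ω' hs => fun hc => h M' ω' hs hc.1
    | bel i θ φ ih =>
      by_cases h : ωs i ∈ M.sem (Formula.bel i θ φ)
      · exact Or.inl (hmem _ (hS ▸ Or.inr (Set.mem_iUnion.2 ⟨i, IsIFormula.bel θ φ, h⟩)))
      · exact Or.inr (hmem _ (hS ▸ Or.inr
          (Set.mem_iUnion.2 ⟨i, IsIFormula.neg (IsIFormula.bel θ φ), h⟩)))
  refine ⟨dich, ?_⟩
  obtain ⟨M', ω', hω'⟩ := hsat
  refine ⟨{φ | Entails S φ}, ⟨⟨⟨M', ω', fun φ hφ => hφ M' ω' hω'⟩, fun φ => dich φ⟩,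
    fun φ hφ => hmem φ hφ⟩, ?_⟩
  rintro D ⟨⟨⟨M'', ω'', hω''⟩, hmax⟩, hSD⟩
  have hω''S : SatAll M'' ω'' S := fun φ hφ => hω'' φ (hSD hφ)
  ext φ
  constructor
  · intro hφD
    rcases dich φ with h | h
    · exact h
    · exact absurd (hω'' φ hφD) (h M'' ω'' hω''S)
  · intro hφ
    rcases hmax φ with h | h
    · exact h
    · exact absurd (hφ M'' ω'' hω''S) (hω'' _ h)
end

section
/- The collection {[φ] : φ ∈ L_B^Θ}, where [φ] := {(x,t) ∈ X × T : φ ∈ D(x,t)}, is an algebra of sets that generates the product σ-algebra Σ_{X×T}. -/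
open MeasureTheory ENNReal

variable {Φ : Type} {n : ℕ} {Θ : Set ℝ≥0∞}

/-- The space `X` of 0-descriptions arising from worlds of `M`. -/
def Desc0 (M : ProbModel Φ n Θ) : Type :=
  {x : Set (Formula Φ (Fin n) Θ) // ∃ ω : M.Ω, x = d0 M ω}

/-- The space `T_i` of `i`-descriptions arising from worlds of `M`. -/
def DescI (M : ProbModel Φ n Θ) (i : Fin n) : Type :=
  {t : Set (Formula Φ (Fin n) Θ) // ∃ ω : M.Ω, t = di M i ω}

/-- `E_0(φ) = {x : φ ∈ x}`. -/
def E0 (M : ProbModel Φ n Θ) (φ : Formula Φ (Fin n) Θ) : Set (Desc0 M) :=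
  {x | φ ∈ x.1}

/-- `E_i(φ) = {t_i : φ ∈ t_i}`. -/
def Ei (M : ProbModel Φ n Θ) (i : Fin n) (φ : Formula Φ (Fin n) Θ) : Set (DescI M i) :=
  {t | φ ∈ t.1}

instance (M : ProbModel Φ n Θ) : MeasurableSpace (Desc0 M) :=
  MeasurableSpace.generateFrom {s | ∃ φ, s = E0 M φ}

instance (M : ProbModel Φ n Θ) (i : Fin n) : MeasurableSpace (DescI M i) :=
  MeasurableSpace.generateFrom {s | ∃ φ, s = Ei M i φ}

/-- `[φ] = {(x,t) : φ ∈ D(x,t)}`, where `D(x,t)` is the unique description extending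
`x ∪ ⋃_i t_i`; membership in `D(x,t)` is equivalently expressed by entailment. -/
def brack (M : ProbModel Φ n Θ) (φ : Formula Φ (Fin n) Θ) :
    Set (Desc0 M × ∀ i, DescI M i) :=
  {q | Entails (q.1.1 ∪ ⋃ i : Fin n, (q.2 i).1) φ}

/-!
A 0-description `x` and `i`-descriptions `tᵢ` coming from possibly different worlds of `M` are
realized jointly in the product model on `Ω × Ωⁿ`, where primitive propositions are read off the
first coordinate and the beliefs of agent `i` off the `i`-th one, pushed forward along the
diagonal. The set `x ∪ ⋃ᵢ tᵢ` decides every primitive proposition and every belief formula, so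
all worlds satisfying it agree on every formula. Hence `[¬φ] = [φ]ᶜ` and `[φ ∧ ψ] = [φ] ∩ [ψ]`,
and `[φ]` is the cylinder over `E₀(φ)` (resp. `Eᵢ(φ)`) when `φ` is propositional (resp. an
`i`-formula); the cylinders over the generators `E₀(φ)`, `Eᵢ(φ)` that are not of this form are
empty.
-/

theorem iInf_measure_eq_one_iff {Ω : Type*} [MeasurableSpace Ω] (μ : Measure Ω)
    [IsProbabilityMeasure μ] (A : Set Ω) :
    (⨅ (E : Set Ω) (_ : A ⊆ E) (_ : MeasurableSet E), μ E) = 1 ↔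
      ∀ E, A ⊆ E → MeasurableSet E → μ E = 1 := by
  refine ⟨fun h E hAE hE ↦ le_antisymm prob_le_one ?_, fun h ↦ le_antisymm ?_ ?_⟩
  · exact h ▸ iInf₂_le_of_le E hAE (iInf_le _ hE)
  · exact iInf₂_le_of_le Set.univ (Set.subset_univ A) (iInf_le_of_le .univ measure_univ.le)
  · exact le_iInf₂ fun E hAE ↦ le_iInf fun hE ↦ (h E hAE hE).ge

namespace ProbModel

section Semantics

attribute [local instance] ProbModel.ms ProbModel.prob

variable (M : ProbModel Φ n Θ)

theorem mem_sem_bel {ω : M.Ω} {i : Fin n} {θ : Θ} {φ : Formula Φ (Fin n) Θ} :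
    ω ∈ M.sem (.bel i θ φ) ↔ (θ : ℝ≥0∞) ≤ M.Pr i ω (M.sem φ) :=
  Iff.rfl

theorem measurableSet_sem (φ : Formula Φ (Fin n) Θ) : MeasurableSet (M.sem φ) := by
  induction φ with
  | prim p => exact M.measπ p
  | neg φ ih => exact ih.compl
  | conj φ ψ ih₁ ih₂ => exact ih₁.inter ih₂
  | bel i θ φ ih => exact M.measPr i _ θ ih

theorem measure_eq_one_of_subset (i : Fin n) (ω : M.Ω) {E : Set M.Ω}
    (hE : MeasurableSet E) (hsub : {ω' | M.Pr i ω' = M.Pr i ω} ⊆ E) : M.Pr i ω E = 1 :=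
  (iInf_measure_eq_one_iff _ _).1 (M.introspect i ω) E hsub hE

def diag (ω : M.Ω) : M.Ω × (Fin n → M.Ω) := (ω, fun _ ↦ ω)

theorem measurable_diag : Measurable M.diag :=
  measurable_id.prodMk (measurable_pi_lambda _ fun _ ↦ measurable_id)

noncomputable abbrev prod : ProbModel Φ n Θ where
  Ω := M.Ω × (Fin n → M.Ω)
  ms := inferInstance
  Pr i w := (M.Pr i (w.2 i)).map M.diag
  prob _ _ := Measure.isProbabilityMeasure_map M.measurable_diag.aemeasurable
  measPr i E θ hE := by
    simp only [Measure.map_apply M.measurable_diag hE]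
    exact measurableSet_preimage (f := fun w : M.Ω × (Fin n → M.Ω) ↦ w.2 i)
      ((measurable_pi_apply i).comp measurable_snd) (M.measPr i _ θ (M.measurable_diag hE))
  π p := Prod.fst ⁻¹' M.π p
  measπ p := measurable_fst (M.measπ p)
  introspect i w := by
    have := Measure.isProbabilityMeasure_map (μ := M.Pr i (w.2 i)) M.measurable_diag.aemeasurable
    refine (iInf_measure_eq_one_iff _ _).2 fun E hsub hE ↦ ?_
    rw [Measure.map_apply M.measurable_diag hE]
    -- `M.diag ω'` has the `i`-beliefs of `w` as soon as `ω'` has the beliefs of `w.2 i`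
    refine M.measure_eq_one_of_subset i _ (M.measurable_diag hE) fun ω' hω' ↦ hsub ?_
    exact congrArg (Measure.map M.diag) hω'

theorem prod_Pr_apply (i : Fin n) (w : M.prod.Ω) {E : Set M.prod.Ω} (hE : MeasurableSet E) :
    M.prod.Pr i w E = M.Pr i (w.2 i) (M.diag ⁻¹' E) :=
  Measure.map_apply M.measurable_diag hE

theorem diag_preimage_prod_sem (φ : Formula Φ (Fin n) Θ) :
    M.diag ⁻¹' M.prod.sem φ = M.sem φ := by
  induction φ with
  | prim p => rfl
  | neg φ ih => exact congrArg compl ih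
  | conj φ ψ ih₁ ih₂ => exact congrArg₂ (· ∩ ·) ih₁ ih₂
  | bel i θ φ ih =>
    ext ω
    rw [Set.mem_preimage, mem_sem_bel, mem_sem_bel, prod_Pr_apply _ _ _ (measurableSet_sem _ φ),
      ih]
    rfl

theorem mem_prod_sem_of_isProp {φ : Formula Φ (Fin n) Θ} (h : IsProp φ) (w : M.prod.Ω) :
    w ∈ M.prod.sem φ ↔ w.1 ∈ M.sem φ := by
  induction h with
  | prim p => rfl
  | neg _ ih => exact not_congr ih
  | conj _ _ ih₁ ih₂ => exact and_congr ih₁ ih₂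

theorem mem_prod_sem_of_isIFormula {i : Fin n} {φ : Formula Φ (Fin n) Θ}
    (h : IsIFormula i φ) (w : M.prod.Ω) : w ∈ M.prod.sem φ ↔ w.2 i ∈ M.sem φ := by
  induction h with
  | bel θ ψ =>
    rw [mem_sem_bel, mem_sem_bel, prod_Pr_apply _ _ _ (measurableSet_sem _ ψ),
      diag_preimage_prod_sem]
  | neg _ ih => exact not_congr ih
  | conj _ _ ih₁ ih₂ => exact and_congr ih₁ ih₂

end Semantics

end ProbModel

section Entailment

def DecidesAtoms (S : Set (Formula Φ (Fin n) Θ)) : Prop :=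
  (∀ p, .prim p ∈ S ∨ .neg (.prim p) ∈ S) ∧ ∀ i θ ψ, .bel i θ ψ ∈ S ∨ .neg (.bel i θ ψ) ∈ S

variable {S : Set (Formula Φ (Fin n) Θ)}

theorem DecidesAtoms.mem_sem_iff (hS : DecidesAtoms S) {M₁ M₂ : ProbModel Φ n Θ}
    {ω₁ : M₁.Ω} {ω₂ : M₂.Ω} (h₁ : SatAll M₁ ω₁ S) (h₂ : SatAll M₂ ω₂ S)
    (φ : Formula Φ (Fin n) Θ) : ω₁ ∈ M₁.sem φ ↔ ω₂ ∈ M₂.sem φ := by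
  induction φ with
  | prim p =>
    rcases hS.1 p with h | h
    exacts [iff_of_true (h₁ _ h) (h₂ _ h), iff_of_false (h₁ _ h) (h₂ _ h)]
  | neg φ ih => exact not_congr ih
  | conj φ ψ ih₁ ih₂ => exact and_congr ih₁ ih₂
  | bel i θ ψ =>
    rcases hS.2 i θ ψ with h | h
    exacts [iff_of_true (h₁ _ h) (h₂ _ h), iff_of_false (h₁ _ h) (h₂ _ h)]

theorem DecidesAtoms.entails_iff (hS : DecidesAtoms S) {M₀ : ProbModel Φ n Θ} {ω₀ : M₀.Ω}
    (h₀ : SatAll M₀ ω₀ S) (φ : Formula Φ (Fin n) Θ) : Entails S φ ↔ ω₀ ∈ M₀.sem φ :=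
  ⟨fun h ↦ h M₀ ω₀ h₀, fun h _ _ h₁ ↦ (hS.mem_sem_iff h₁ h₀ φ).2 h⟩

end Entailment

section Descriptions

variable {M : ProbModel Φ n Θ}

theorem Desc0.mem_or_neg_mem (x : Desc0 M) {φ : Formula Φ (Fin n) Θ} (h : IsProp φ) :
    φ ∈ x.1 ∨ .neg φ ∈ x.1 := by
  obtain ⟨ω, hx⟩ := x.2
  rw [hx]
  exact (em (ω ∈ M.sem φ)).imp (⟨h, ·⟩) (⟨h.neg, ·⟩)

theorem DescI.mem_or_neg_mem {i : Fin n} (t : DescI M i) {φ : Formula Φ (Fin n) Θ}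
    (h : IsIFormula i φ) : φ ∈ t.1 ∨ .neg φ ∈ t.1 := by
  obtain ⟨ω, ht⟩ := t.2
  rw [ht]
  exact (em (ω ∈ M.sem φ)).imp (⟨h, ·⟩) (⟨h.neg, ·⟩)

def descUnion (q : Desc0 M × ∀ i, DescI M i) : Set (Formula Φ (Fin n) Θ) :=
  q.1.1 ∪ ⋃ i, (q.2 i).1

theorem mem_brack_iff {φ : Formula Φ (Fin n) Θ} {q : Desc0 M × ∀ i, DescI M i} :
    q ∈ brack M φ ↔ Entails (descUnion q) φ :=
  Iff.rfl

theorem subset_descUnion_fst (q : Desc0 M × ∀ i, DescI M i) : q.1.1 ⊆ descUnion q :=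
  Set.subset_union_left

theorem subset_descUnion_snd (q : Desc0 M × ∀ i, DescI M i) (i : Fin n) :
    (q.2 i).1 ⊆ descUnion q :=
  fun _ hφ ↦ Or.inr (Set.mem_iUnion.2 ⟨i, hφ⟩)

theorem decidesAtoms_descUnion (q : Desc0 M × ∀ i, DescI M i) : DecidesAtoms (descUnion q) :=
  ⟨fun p ↦ (q.1.mem_or_neg_mem (.prim p)).imp (subset_descUnion_fst q ·)
      (subset_descUnion_fst q ·),
    fun i θ ψ ↦ ((q.2 i).mem_or_neg_mem (.bel θ ψ)).imp (subset_descUnion_snd q i ·)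
      (subset_descUnion_snd q i ·)⟩

theorem exists_satAll_descUnion (q : Desc0 M × ∀ i, DescI M i) :
    ∃ w : M.prod.Ω, SatAll M.prod w (descUnion q) := by
  obtain ⟨ω₀, hx⟩ := q.1.2
  choose f hf using fun i ↦ (q.2 i).2
  refine ⟨(ω₀, f), fun φ hφ ↦ ?_⟩
  rcases hφ with hφ | hφ
  · rw [hx] at hφ
    exact (M.mem_prod_sem_of_isProp hφ.1 _).2 hφ.2
  · obtain ⟨i, hφ⟩ := Set.mem_iUnion.1 hφ
    rw [hf i] at hφ
    exact (M.mem_prod_sem_of_isIFormula hφ.1 _).2 hφ.2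

theorem brack_neg (φ : Formula Φ (Fin n) Θ) : brack M (.neg φ) = (brack M φ)ᶜ := by
  ext q
  obtain ⟨w, hw⟩ := exists_satAll_descUnion q
  simp only [Set.mem_compl_iff, mem_brack_iff, (decidesAtoms_descUnion q).entails_iff hw]
  rfl

theorem brack_conj (φ ψ : Formula Φ (Fin n) Θ) :
    brack M (.conj φ ψ) = brack M φ ∩ brack M ψ := by
  ext q
  obtain ⟨w, hw⟩ := exists_satAll_descUnion q
  simp only [Set.mem_inter_iff, mem_brack_iff, (decidesAtoms_descUnion q).entails_iff hw]
  rfl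

theorem mem_of_entails_of_mem_or_neg_mem {q : Desc0 M × ∀ i, DescI M i}
    {φ : Formula Φ (Fin n) Θ} {A : Set (Formula Φ (Fin n) Θ)} (hA : A ⊆ descUnion q)
    (hφ : φ ∈ A ∨ .neg φ ∈ A) (h : Entails (descUnion q) φ) : φ ∈ A := by
  refine hφ.resolve_right fun hneg ↦ ?_
  obtain ⟨w, hw⟩ := exists_satAll_descUnion q
  exact hw _ (hA hneg) (h _ w hw)

theorem preimage_fst_E0 {φ : Formula Φ (Fin n) Θ} (h : IsProp φ) :
    Prod.fst ⁻¹' E0 M φ = brack M φ := by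
  ext q
  exact ⟨fun hφ _ _ hsat ↦ hsat φ (subset_descUnion_fst q hφ),
    mem_of_entails_of_mem_or_neg_mem (subset_descUnion_fst q) (q.1.mem_or_neg_mem h)⟩

theorem preimage_eval_Ei {i : Fin n} {φ : Formula Φ (Fin n) Θ} (h : IsIFormula i φ) :
    (fun q : Desc0 M × ∀ j, DescI M j ↦ q.2 i) ⁻¹' Ei M i φ = brack M φ := by
  ext q
  exact ⟨fun hφ _ _ hsat ↦ hsat φ (subset_descUnion_snd q i hφ),
    mem_of_entails_of_mem_or_neg_mem (subset_descUnion_snd q i) ((q.2 i).mem_or_neg_mem h)⟩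

theorem E0_eq_empty {φ : Formula Φ (Fin n) Θ} (h : ¬IsProp φ) : E0 M φ = ∅ := by
  refine Set.eq_empty_of_forall_notMem fun x hx ↦ ?_
  obtain ⟨ω, hω⟩ := x.2
  exact h (show φ ∈ d0 M ω from hω ▸ hx).1

theorem Ei_eq_empty {i : Fin n} {φ : Formula Φ (Fin n) Θ} (h : ¬IsIFormula i φ) :
    Ei M i φ = ∅ := by
  refine Set.eq_empty_of_forall_notMem fun t ht ↦ ?_
  obtain ⟨ω, hω⟩ := t.2
  exact h (show φ ∈ di M i ω from hω ▸ ht).1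

end Descriptions

section Measurability

variable (M : ProbModel Φ n Θ)

theorem measurableSet_brack (φ : Formula Φ (Fin n) Θ) : MeasurableSet (brack M φ) := by
  induction φ with
  | prim p =>
    rw [← preimage_fst_E0 (.prim p)]
    exact measurable_fst (MeasurableSpace.measurableSet_generateFrom ⟨_, rfl⟩)
  | neg φ ih => exact brack_neg φ ▸ ih.compl
  | conj φ ψ ih₁ ih₂ => exact brack_conj φ ψ ▸ ih₁.inter ih₂
  | bel i θ ψ =>
    rw [← preimage_eval_Ei (.bel θ ψ)]
    exact ((measurable_pi_apply i).comp measurable_snd)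
      (MeasurableSpace.measurableSet_generateFrom ⟨_, rfl⟩)

theorem generateFrom_brack :
    MeasurableSpace.generateFrom {s | ∃ φ : Formula Φ (Fin n) Θ, s = brack M φ}
      = (inferInstance : MeasurableSpace (Desc0 M × ∀ i, DescI M i)) := by
  refine le_antisymm (MeasurableSpace.generateFrom_le ?_) ?_
  · rintro _ ⟨φ, rfl⟩
    exact measurableSet_brack M φ
  let m := MeasurableSpace.generateFrom {s | ∃ φ : Formula Φ (Fin n) Θ, s = brack M φ}
  have hbrack (φ : Formula Φ (Fin n) Θ) : MeasurableSet[m] (brack M φ) :=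
    MeasurableSpace.measurableSet_generateFrom ⟨φ, rfl⟩
  have hfst : Measurable[m] (Prod.fst : Desc0 M × (∀ i, DescI M i) → Desc0 M) := by
    refine measurable_generateFrom fun _ ⟨φ, hs⟩ ↦ hs ▸ ?_
    by_cases h : IsProp φ
    · exact preimage_fst_E0 h ▸ hbrack φ
    · exact E0_eq_empty h ▸ MeasurableSet.empty
  have hsnd : Measurable[m] (Prod.snd : Desc0 M × (∀ i, DescI M i) → ∀ i, DescI M i) := by
    refine measurable_pi_lambda _ fun i ↦ measurable_generateFrom fun _ ⟨φ, hs⟩ ↦ hs ▸ ?_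
    by_cases h : IsIFormula i φ
    · exact preimage_eval_Ei h ▸ hbrack φ
    · exact Ei_eq_empty h ▸ MeasurableSet.empty
  exact fun s hs ↦ hfst.prodMk hsnd hs

end Measurability

/-- The collection `{[φ] : φ ∈ L_B^Θ}` is an algebra of sets generating the product
σ-algebra on `X × T`. -/
theorem stmt15 [Nonempty Φ] (M : ProbModel Φ n Θ) :
    (Set.univ ∈ {s | ∃ φ : Formula Φ (Fin n) Θ, s = brack M φ}) ∧
    (∀ s ∈ {s | ∃ φ : Formula Φ (Fin n) Θ, s = brack M φ},
      sᶜ ∈ {s | ∃ φ : Formula Φ (Fin n) Θ, s = brack M φ}) ∧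
    (∀ s t, s ∈ {s | ∃ φ : Formula Φ (Fin n) Θ, s = brack M φ} →
      t ∈ {s | ∃ φ : Formula Φ (Fin n) Θ, s = brack M φ} →
      s ∪ t ∈ {s | ∃ φ : Formula Φ (Fin n) Θ, s = brack M φ}) ∧
    MeasurableSpace.generateFrom {s | ∃ φ : Formula Φ (Fin n) Θ, s = brack M φ}
      = (inferInstance : MeasurableSpace (Desc0 M × ∀ i, DescI M i)) := by
  obtain ⟨p⟩ := ‹Nonempty Φ›
  refine ⟨⟨.neg (.conj (.prim p) (.neg (.prim p))), ?_⟩, ?_, ?_, generateFrom_brack M⟩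
  · rw [brack_neg, brack_conj, brack_neg, Set.inter_compl_self, Set.compl_empty]
  · rintro _ ⟨φ, rfl⟩
    exact ⟨.neg φ, (brack_neg φ).symm⟩
  · rintro _ _ ⟨φ, rfl⟩ ⟨ψ, rfl⟩
    refine ⟨.neg (.conj (.neg φ) (.neg ψ)), ?_⟩
    rw [brack_neg, brack_conj, brack_neg, brack_neg, Set.compl_inter, compl_compl, compl_compl]
end

section
/- If Θ is dense in [0,1], then any two probability measures μ, μ' on X × T satisfying the constraint 'μ([φ]) ≥ θ iff B_i^θ φ ∈ t_i for all θ ∈ Θ' agree on every set [φ], with common value sup{θ ∈ Θ : B_i^θ φ ∈ t_i}; hence they agree on the σ-algebra generated by {[φ]} and P_{t_i} is a singleton. -/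
open MeasureTheory ENNReal

variable {Φ : Type} {n : ℕ} {Θ : Set ℝ≥0∞}

/-! Agreement with the `i`-description of `ω` pins down `μ [φ]` through the thresholds `θ ∈ Θ`
with `B_i^θ φ ∈ t_i`: by density of `Θ` these are exactly the points of `Θ` below `μ [φ]`, so
`μ [φ]` is their supremum. For a contradiction `⊥ = ψ ∧ ¬ψ` no threshold other than `0`
qualifies, so `μ [⊥] = 0`; and `[⊥]` is precisely the set of unsatisfiable pairs `(x, t)`.
On a satisfiable pair every cylinder `{φ ∈ x}` or `{φ ∈ t_j}` agrees with `[φ]` (or with `[⊥]`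
when `φ` has the wrong shape), because descriptions are maximal. So up to a common null set
each set of the π-system generated by the cylinders is some `[ψ]`, on which `μ` and `μ'`
agree. -/

theorem sSup_inter_Iic_eq_of_Iio_subset_closure {α : Type*} [CompleteLinearOrder α]
    [TopologicalSpace α] [OrderTopology α] [DenselyOrdered α] {s : Set α} {x : α}
    (hx : Set.Iio x ⊆ closure s) : sSup (s ∩ Set.Iic x) = x := by
  refine le_antisymm (sSup_le fun _ hy => hy.2) (le_of_not_gt fun hlt => ?_)
  obtain ⟨c, hsc, hcx⟩ := exists_between hlt
  obtain ⟨y, ⟨hsy, hyx⟩, hy⟩ :=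
    mem_closure_iff.1 (hx hcx) _ isOpen_Ioo ⟨hsc, hcx⟩
  exact hsy.not_ge (le_sSup ⟨hy, hyx.le⟩)

section Descriptions

variable {M : ProbModel Φ n Θ}

theorem ProbModel.sem_conj_neg_self (ψ : Formula Φ (Fin n) Θ) :
    M.sem (.conj ψ (.neg ψ)) = ∅ :=
  Set.inter_compl_self (M.sem ψ)

theorem bel_mem_di_iff {i : Fin n} {ω : M.Ω} {θ : Θ} {φ : Formula Φ (Fin n) Θ} :
    Formula.bel i θ φ ∈ di M i ω ↔ (θ : ℝ≥0∞) ≤ M.Pr i ω (M.sem φ) :=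
  ⟨fun h => h.2, fun h => ⟨.bel θ φ, h⟩⟩

theorem mem_iff_entails_of_subset {D S : Set (Formula Φ (Fin n) Θ)} {φ : Formula Φ (Fin n) Θ}
    (hφ : φ ∈ D ∨ .neg φ ∈ D) (hDS : D ⊆ S)
    (hS : ∃ (M' : ProbModel Φ n Θ) (ω : M'.Ω), SatAll M' ω S) :
    φ ∈ D ↔ Entails S φ := by
  refine ⟨fun h _ _ hsat => hsat φ (hDS h), fun h => hφ.resolve_right fun hneg => ?_⟩
  obtain ⟨M', ω, hsat⟩ := hS
  exact hsat _ (hDS hneg) (h M' ω hsat)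

theorem Desc0.mem_or_neg_mem_or_forall_notMem (φ : Formula Φ (Fin n) Θ) :
    (∀ x : Desc0 M, φ ∈ x.1 ∨ .neg φ ∈ x.1) ∨ ∀ x : Desc0 M, φ ∉ x.1 := by
  by_cases hφ : IsProp φ
  · refine .inl fun ⟨_, ω, hx⟩ => ?_
    subst hx
    by_cases hω : ω ∈ M.sem φ
    exacts [.inl ⟨hφ, hω⟩, .inr ⟨hφ.neg, hω⟩]
  · refine .inr ?_
    rintro ⟨_, ω, rfl⟩ hmem
    exact hφ hmem.1

theorem DescI.mem_or_neg_mem_or_forall_notMem (j : Fin n) (φ : Formula Φ (Fin n) Θ) :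
    (∀ t : DescI M j, φ ∈ t.1 ∨ .neg φ ∈ t.1) ∨ ∀ t : DescI M j, φ ∉ t.1 := by
  by_cases hφ : IsIFormula j φ
  · refine .inl fun ⟨_, ω, ht⟩ => ?_
    subst ht
    by_cases hω : ω ∈ M.sem φ
    exacts [.inl ⟨hφ, hω⟩, .inr ⟨hφ.neg, hω⟩]
  · refine .inr ?_
    rintro ⟨_, ω, rfl⟩ hmem
    exact hφ hmem.1

def pairFormulas (q : Desc0 M × ∀ j, DescI M j) : Set (Formula Φ (Fin n) Θ) :=
  q.1.1 ∪ ⋃ j : Fin n, (q.2 j).1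

variable (M) in
def satisfiablePairs : Set (Desc0 M × ∀ j, DescI M j) :=
  {q | ∃ (M' : ProbModel Φ n Θ) (ω : M'.Ω), SatAll M' ω (pairFormulas q)}

theorem brack_conj_neg_self (ψ : Formula Φ (Fin n) Θ) :
    brack M (.conj ψ (.neg ψ)) = (satisfiablePairs M)ᶜ := by
  ext q
  refine ⟨fun h ⟨M', ω, hsat⟩ => ?_, fun h M' ω hsat => (h ⟨M', ω, hsat⟩).elim⟩
  simpa only [ProbModel.sem_conj_neg_self, Set.mem_empty_iff_false] using h M' ω hsat

theorem exists_brack_inter_satisfiablePairs_eq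
    (D : (Desc0 M × ∀ j, DescI M j) → Set (Formula Φ (Fin n) Θ))
    (hD : ∀ q, D q ⊆ pairFormulas q) (φ : Formula Φ (Fin n) Θ)
    (hφ : (∀ q, φ ∈ D q ∨ .neg φ ∈ D q) ∨ ∀ q, φ ∉ D q) :
    ∃ ψ, {q | φ ∈ D q} ∩ satisfiablePairs M = brack M ψ ∩ satisfiablePairs M := by
  rcases hφ with hφ | hφ
  · refine ⟨φ, Set.ext fun q => and_congr_left fun hq => ?_⟩
    exact mem_iff_entails_of_subset (hφ q) (hD q) hq
  · refine ⟨.conj φ (.neg φ), ?_⟩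
    rw [brack_conj_neg_self, Set.compl_inter_self, Set.eq_empty_iff_forall_notMem]
    exact fun q hq => hφ q hq.1

variable (M) in
def formulaDeterminedSets : Set (Set (Desc0 M × ∀ j, DescI M j)) :=
  {s | MeasurableSet s ∧ ∃ ψ, s ∩ satisfiablePairs M = brack M ψ ∩ satisfiablePairs M}

theorem isPiSystem_formulaDeterminedSets : IsPiSystem (formulaDeterminedSets M) := by
  rintro s ⟨hs, ψ, hψ⟩ t ⟨ht, χ, hχ⟩ -
  refine ⟨hs.inter ht, .conj ψ χ, ?_⟩
  rw [Set.inter_inter_distrib_right, hψ, hχ, ← Set.inter_inter_distrib_right, brack_conj]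

theorem fst_preimage_E0_mem_formulaDeterminedSets (φ : Formula Φ (Fin n) Θ) :
    Prod.fst ⁻¹' E0 M φ ∈ formulaDeterminedSets M :=
  ⟨(MeasurableSpace.measurableSet_generateFrom ⟨φ, rfl⟩ : MeasurableSet (E0 M φ)).preimage
      measurable_fst,
    exists_brack_inter_satisfiablePairs_eq (fun q => q.1.1) (fun _ => Set.subset_union_left) φ
      ((Desc0.mem_or_neg_mem_or_forall_notMem φ).imp (fun h q => h q.1) (fun h q => h q.1))⟩

theorem eval_preimage_Ei_mem_formulaDeterminedSets (j : Fin n) (φ : Formula Φ (Fin n) Θ) :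
    (fun q : Desc0 M × ∀ j, DescI M j => q.2 j) ⁻¹' Ei M j φ ∈ formulaDeterminedSets M :=
  ⟨(MeasurableSpace.measurableSet_generateFrom ⟨φ, rfl⟩ : MeasurableSet (Ei M j φ)).preimage
      ((measurable_pi_apply j).comp measurable_snd),
    exists_brack_inter_satisfiablePairs_eq (fun q => (q.2 j).1)
      (fun q => (Set.subset_iUnion (fun j => (q.2 j).1) j).trans Set.subset_union_right) φ
      ((DescI.mem_or_neg_mem_or_forall_notMem j φ).imp (fun h q => h (q.2 j))
        (fun h q => h (q.2 j)))⟩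

theorem generateFrom_formulaDeterminedSets :
    MeasurableSpace.generateFrom (formulaDeterminedSets M) =
      (inferInstance : MeasurableSpace (Desc0 M × ∀ j, DescI M j)) := by
  let : MeasurableSpace (Desc0 M × ∀ j, DescI M j) :=
    MeasurableSpace.generateFrom (formulaDeterminedSets M)
  refine le_antisymm (MeasurableSpace.generateFrom_le fun _ hs => hs.1) (sup_le ?_ ?_)
  · refine Measurable.comap_le (measurable_generateFrom ?_)
    rintro _ ⟨φ, rfl⟩
    exact .basic _ (fst_preimage_E0_mem_formulaDeterminedSets φ)
  · refine Measurable.comap_le (measurable_pi_iff.2 fun j => measurable_generateFrom ?_)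
    rintro _ ⟨φ, rfl⟩
    exact .basic _ (eval_preimage_Ei_mem_formulaDeterminedSets j φ)

end Descriptions

def AgreesWithDescription (M : ProbModel Φ n Θ) (i : Fin n) (ω : M.Ω)
    (μ : Measure (Desc0 M × ∀ j, DescI M j)) : Prop :=
  ∀ (φ : Formula Φ (Fin n) Θ) (θ : Θ), (θ : ℝ≥0∞) ≤ μ (brack M φ) ↔ Formula.bel i θ φ ∈ di M i ω

namespace AgreesWithDescription

variable {M : ProbModel Φ n Θ} {i : Fin n} {ω : M.Ω} {μ : Measure (Desc0 M × ∀ j, DescI M j)}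
  [IsProbabilityMeasure μ]

theorem measure_brack_eq_sSup (hdense : Set.Icc (0 : ℝ≥0∞) 1 ⊆ closure Θ)
    (h : AgreesWithDescription M i ω μ) (φ : Formula Φ (Fin n) Θ) :
    μ (brack M φ) = sSup {r : ℝ≥0∞ | ∃ θ : Θ, r = (θ : ℝ≥0∞) ∧ Formula.bel i θ φ ∈ di M i ω} := by
  have hthresholds : {r : ℝ≥0∞ | ∃ θ : Θ, r = (θ : ℝ≥0∞) ∧ Formula.bel i θ φ ∈ di M i ω} =
      Θ ∩ Set.Iic (μ (brack M φ)) := by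
    ext r
    refine ⟨fun ⟨θ, hr, hθ⟩ => hr ▸ ⟨θ.2, (h φ θ).2 hθ⟩, fun ⟨hr, hle⟩ => ⟨⟨r, hr⟩, rfl, ?_⟩⟩
    exact (h φ ⟨r, hr⟩).1 hle
  rw [hthresholds, sSup_inter_Iic_eq_of_Iio_subset_closure]
  exact fun c hc => hdense ⟨zero_le, hc.le.trans prob_le_one⟩

theorem measure_brack_conj_neg_self (hdense : Set.Icc (0 : ℝ≥0∞) 1 ⊆ closure Θ)
    (h : AgreesWithDescription M i ω μ) (ψ : Formula Φ (Fin n) Θ) :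
    μ (brack M (.conj ψ (.neg ψ))) = 0 := by
  rw [h.measure_brack_eq_sSup hdense]
  refine nonpos_iff_eq_zero.1 (sSup_le ?_)
  rintro _ ⟨θ, rfl, hθ⟩
  simpa only [ProbModel.sem_conj_neg_self, measure_empty] using bel_mem_di_iff.1 hθ

theorem measure_eq_measure_brack (hdense : Set.Icc (0 : ℝ≥0∞) 1 ⊆ closure Θ)
    (h : AgreesWithDescription M i ω μ) {s : Set (Desc0 M × ∀ j, DescI M j)}
    {ψ : Formula Φ (Fin n) Θ} (hs : s ∩ satisfiablePairs M = brack M ψ ∩ satisfiablePairs M) :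
    μ s = μ (brack M ψ) := by
  have hnull : μ (satisfiablePairs M)ᶜ = 0 :=
    brack_conj_neg_self ψ ▸ h.measure_brack_conj_neg_self hdense ψ
  rw [← measure_inter_conull hnull, hs, measure_inter_conull hnull]

end AgreesWithDescription

/-- If `Θ` is dense in `[0,1]`, then any two probability measures on `X × T` satisfying
the constraints determined by an `i`-description `t_i` agree on every `[φ]`, with common
value `sup {θ ∈ Θ : B_i^θ φ ∈ t_i}`; hence they are equal and `P_{t_i}` is a singleton. -/
theorem stmt17 (M : ProbModel Φ n Θ)
    (hdense : Set.Icc (0 : ℝ≥0∞) 1 ⊆ closure Θ)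
    (i : Fin n) (ω : M.Ω)
    (μ μ' : Measure (Desc0 M × ∀ j, DescI M j))
    (hμ : IsProbabilityMeasure μ) (hμ' : IsProbabilityMeasure μ')
    (h : ∀ (φ : Formula Φ (Fin n) Θ) (θ : Θ),
      ((θ : ℝ≥0∞) ≤ μ (brack M φ) ↔ Formula.bel i θ φ ∈ di M i ω))
    (h' : ∀ (φ : Formula Φ (Fin n) Θ) (θ : Θ),
      ((θ : ℝ≥0∞) ≤ μ' (brack M φ) ↔ Formula.bel i θ φ ∈ di M i ω)) :
    (∀ φ : Formula Φ (Fin n) Θ,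
      μ (brack M φ) = sSup {r : ℝ≥0∞ | ∃ θ : Θ, r = (θ : ℝ≥0∞) ∧
        Formula.bel i θ φ ∈ di M i ω} ∧
      μ (brack M φ) = μ' (brack M φ)) ∧
    μ = μ' := by
  have hval φ : μ (brack M φ) = _ := AgreesWithDescription.measure_brack_eq_sSup hdense h φ
  have hagree φ : μ (brack M φ) = μ' (brack M φ) :=
    (hval φ).trans (AgreesWithDescription.measure_brack_eq_sSup hdense h' φ).symm
  refine ⟨fun φ => ⟨hval φ, hagree φ⟩, ext_of_generate_finite _
    generateFrom_formulaDeterminedSets.symm isPiSystem_formulaDeterminedSets ?_ (by simp)⟩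
  rintro s ⟨-, ψ, hψ⟩
  rw [AgreesWithDescription.measure_eq_measure_brack hdense h hψ,
    AgreesWithDescription.measure_eq_measure_brack hdense h' hψ, hagree]
end

section
/- Type morphisms preserve truth: if (f_1,...,f_n) is a type morphism from type space T to type space T' (over a common state space X), then for any interpretation ν : Φ → Σ_X, any (x,t) ∈ X × T, and any formula φ of L_B^{[0,1]}(Φ), (x,t) ∈ [[φ]]_{(T,ν)} if and only if f(x,t) ∈ [[φ]]_{(T',ν)}, where f = (id_X, f_1, ..., f_n). -/
open MeasureTheory ENNReal

/-- Type morphisms preserve truth: if `(f_1,...,f_n)` is a type morphism from `T` to `T'`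
over a common state space `X`, then for any interpretation `ν`, any `(x,t)`, and any
formula `φ` of `L_B^{[0,1]}`, `(x,t) ∈ [[φ]]_{(T,ν)}` iff `f(x,t) ∈ [[φ]]_{(T',ν)}`. -/
theorem stmt19 {X Φ : Type*} {n : ℕ} [MeasurableSpace X]
    {T T' : Fin n → Type*} [∀ i, MeasurableSpace (T i)] [∀ i, MeasurableSpace (T' i)]
    (β : ∀ i, T i → Measure (X × ∀ j, T j))
    (β' : ∀ i, T' i → Measure (X × ∀ j, T' j))
    (hprob : ∀ i ti, IsProbabilityMeasure (β i ti))
    (hprob' : ∀ i ti', IsProbabilityMeasure (β' i ti'))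
    (hβ : ∀ i (E : Set (X × ∀ j, T j)), MeasurableSet E → ∀ θ : ℝ≥0∞,
      MeasurableSet {ti : T i | θ ≤ β i ti E})
    (hβ' : ∀ i (E : Set (X × ∀ j, T' j)), MeasurableSet E → ∀ θ : ℝ≥0∞,
      MeasurableSet {ti' : T' i | θ ≤ β' i ti' E})
    (f : ∀ i, T i → T' i)
    (hf : ∀ i, Measurable (f i))
    (hmorph : ∀ (i : Fin n) (ti : T i) (E : Set (X × ∀ j, T' j)), MeasurableSet E →
      β' i (f i ti) E
        = β i ti ((fun q : X × ∀ j, T j => (q.1, fun j => f j (q.2 j))) ⁻¹' E))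
    (ν : Φ → Set X) (hν : ∀ p, MeasurableSet (ν p))
    (φ : Formula Φ (Fin n) (Set.Icc (0 : ℝ≥0∞) 1)) (q : X × ∀ j, T j) :
    q ∈ semT β ν φ ↔ (q.1, fun j => f j (q.2 j)) ∈ semT β' ν φ := by
  set F : (X × ∀ j, T j) → (X × ∀ j, T' j) :=
    fun q => (q.1, fun j => f j (q.2 j)) with hF
  have key : ∀ ψ : Formula Φ (Fin n) (Set.Icc (0 : ℝ≥0∞) 1),
      MeasurableSet (semT β' ν ψ) ∧ F ⁻¹' semT β' ν ψ = semT β ν ψ := by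
    intro ψ
    induction ψ with
    | prim p =>
        constructor
        · exact (hν p).preimage measurable_fst
        · rfl
    | neg φ ih =>
        exact ⟨ih.1.compl, by simp [semT, Set.preimage_compl, ih.2]⟩
    | conj φ₁ φ₂ ih₁ ih₂ =>
        exact ⟨ih₁.1.inter ih₂.1, by simp [semT, Set.preimage_inter, ih₁.2, ih₂.2]⟩
    | bel i θ φ ih =>
        constructor
        · have : semT β' ν (Formula.bel i θ φ)
              = (fun q : X × ∀ j, T' j => q.2 i) ⁻¹'
                {ti' : T' i | (θ : ℝ≥0∞) ≤ β' i ti' (semT β' ν φ)} := rfl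
          rw [this]
          exact (hβ' i _ ih.1 θ).preimage ((measurable_pi_apply i).comp measurable_snd)
        · ext q
          simp only [Set.mem_preimage, semT, Set.mem_setOf_eq, hF]
          rw [hmorph i (q.2 i) _ ih.1, ih.2]
  rw [show (q.1, fun j => f j (q.2 j)) = F q from rfl, ← Set.mem_preimage, (key φ).2]
end
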